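/- For the general nonstandard family (A = (−(1/2)b_Zy, (1/2)b_Zx, −(1/2)b_φ(x²+y²)), W = b_φ(−(1/8)b_φ(x²+y²)² + w₃(x²+y²) − b_Z((a/2)(x²−y²) + bxy) + w₁x + w₂y), H = (1/2)Σ_i(p_i^A)² + W), the integral X₁ = l₃^Ap₃^A + a(p₁^A)² + b p₁^Ap₂^A + Σ_j s_j p_j^A + m, with s_j and m given by the Cartesian translation of formulas (4.12)–(4.13) and (4.19) of the paper, satisfies {H, X₁} = 0 and {X₁, p₃} = 0. -/

import Mathlib

noncomputable def pderiv (i : Fin 6) (F : (Fin 6 → ℝ) → ℝ) (q : Fin 6 → ℝ) : ℝ :=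
  fderiv ℝ F q (Pi.single i 1)

/-- Canonical Poisson bracket on phase space ℝ⁶: coordinates `q 0, q 1, q 2` are
positions and `q 3, q 4, q 5` are momenta. -/
noncomputable def poisson (F G : (Fin 6 → ℝ) → ℝ) (q : Fin 6 → ℝ) : ℝ :=
  ∑ k : Fin 3, (pderiv (Fin.castAdd 3 k) F q * pderiv (Fin.natAdd 3 k) G q
    - pderiv (Fin.castAdd 3 k) G q * pderiv (Fin.natAdd 3 k) F q)

noncomputable def r2 (q : Fin 6 → ℝ) : ℝ := (q 0)^2 + (q 1)^2

/-- vector potential `A = (-(1/2)b_Z y, (1/2)b_Z x, -(1/2)b_φ(x²+y²))` -/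
noncomputable def A1 (bZ : ℝ) (q : Fin 6 → ℝ) : ℝ := -(1/2)*bZ*q 1
noncomputable def A2 (bZ : ℝ) (q : Fin 6 → ℝ) : ℝ := (1/2)*bZ*q 0
noncomputable def A3 (bφ : ℝ) (q : Fin 6 → ℝ) : ℝ := -(1/2)*bφ*r2 q

/-- electrostatic potential of the nonstandard family -/
noncomputable def Wpot (a b bφ bZ w₁ w₂ w₃ : ℝ) (q : Fin 6 → ℝ) : ℝ :=
  bφ*(-(1/8)*bφ*(r2 q)^2 + w₃*r2 q - bZ*((a/2)*((q 0)^2 - (q 1)^2) + b*q 0*q 1)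
      + w₁*q 0 + w₂*q 1)

/-- Hamiltonian `H = (1/2)((p₁+A₁)² + (p₂+A₂)² + (p₃+A₃)²) + W` -/
noncomputable def Ham (a b bφ bZ w₁ w₂ w₃ : ℝ) (q : Fin 6 → ℝ) : ℝ :=
  (1/2)*((q 3 + A1 bZ q)^2 + (q 4 + A2 bZ q)^2 + (q 5 + A3 bφ q)^2)
    + Wpot a b bφ bZ w₁ w₂ w₃ q

/-- covariant momenta in the chosen gauge -/
noncomputable def P1 (bZ : ℝ) (q : Fin 6 → ℝ) : ℝ := q 3 + A1 bZ q
noncomputable def P2 (bZ : ℝ) (q : Fin 6 → ℝ) : ℝ := q 4 + A2 bZ q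
noncomputable def P3 (bφ : ℝ) (q : Fin 6 → ℝ) : ℝ := q 5 + A3 bφ q

/-- `l₃^A = x p₂^A - y p₁^A` -/
noncomputable def L3A (bZ : ℝ) (q : Fin 6 → ℝ) : ℝ := q 0 * P2 bZ q - q 1 * P1 bZ q

/-- Cartesian form of the lower-order coefficient `s₁` of the integral `X₁`
(translation of (4.12) of the paper). -/
noncomputable def s1 (a b bφ bZ w₂ w₃ : ℝ) (q : Fin 6 → ℝ) : ℝ :=
  -b*bZ*q 0 + a*bZ*q 1 + 2*w₃*q 1 - (1/2)*bφ*r2 q*q 1 + w₂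

/-- Cartesian form of `s₂`. -/
noncomputable def s2 (a b bφ bZ w₁ w₃ : ℝ) (q : Fin 6 → ℝ) : ℝ :=
  a*bZ*q 0 + b*bZ*q 1 - 2*w₃*q 0 + (1/2)*bφ*r2 q*q 0 - w₁

/-- Cartesian form of `s₃` (translation of `s_Z` of (4.12)). -/
noncomputable def s3 (a b bφ bZ sZ3 : ℝ) (q : Fin 6 → ℝ) : ℝ :=
  -bφ*(a*(q 0)^2 + b*q 0*q 1) - (bZ/2)*r2 q + sZ3

/-- Cartesian form of the scalar part `m` of the integral `X₁`
(translation of (4.19) of the paper). -/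
noncomputable def mfun (a b bφ bZ w₁ w₂ w₃ sZ3 : ℝ) (q : Fin 6 → ℝ) : ℝ :=
  -(1/2)*(bφ^2*r2 q + 2*bZ^2 - 4*bφ*w₃ + 2*bφ*bZ*a)*(a*(q 0)^2 + b*q 0*q 1)
    + (2*bφ*w₁*a + bφ*w₂*b + w₁*bZ)*q 0 + (bφ*w₁*b + w₂*bZ)*q 1
    - (1/4)*(bφ*bZ*(r2 q)^2 + 2*(bφ*bZ*b^2 - bZ^2*a - bφ*sZ3 - 2*w₃*bZ)*r2 q)

/-- The full second-order integral
`X₁ = l₃^Ap₃^A + a(p₁^A)² + b p₁^Ap₂^A + Σⱼ sⱼ pⱼ^A + m`. -/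
noncomputable def X1 (a b bφ bZ w₁ w₂ w₃ sZ3 : ℝ) (q : Fin 6 → ℝ) : ℝ :=
  L3A bZ q * P3 bφ q + a*(P1 bZ q)^2 + b*P1 bZ q*P2 bZ q
    + s1 a b bφ bZ w₂ w₃ q * P1 bZ q + s2 a b bφ bZ w₁ w₃ q * P2 bZ q
    + s3 a b bφ bZ sZ3 q * P3 bφ q + mfun a b bφ bZ w₁ w₂ w₃ sZ3 q


section PderivRules
variable {i : Fin 6} {F G : (Fin 6 → ℝ) → ℝ} {q : Fin 6 → ℝ}

lemma pderiv_const' (i : Fin 6) (c : ℝ) (q : Fin 6 → ℝ) : pderiv i (fun _ => c) q = 0 := by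
  simp [pderiv]

lemma pderiv_coord (i j : Fin 6) (q : Fin 6 → ℝ) :
    pderiv i (fun q => q j) q = if j = i then 1 else 0 := by
  have h : (fun q : Fin 6 → ℝ => q j) = (ContinuousLinearMap.proj j : (Fin 6 → ℝ) →L[ℝ] ℝ) := rfl
  rw [pderiv, h, ContinuousLinearMap.fderiv]
  simp [Pi.single_apply]

lemma pderiv_add' (hF : DifferentiableAt ℝ F q) (hG : DifferentiableAt ℝ G q) :
    pderiv i (fun q => F q + G q) q = pderiv i F q + pderiv i G q := by
  simp [pderiv, fderiv_fun_add hF hG]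

lemma pderiv_sub' (hF : DifferentiableAt ℝ F q) (hG : DifferentiableAt ℝ G q) :
    pderiv i (fun q => F q - G q) q = pderiv i F q - pderiv i G q := by
  simp [pderiv, fderiv_fun_sub hF hG]

lemma pderiv_neg' : pderiv i (fun q => -F q) q = -pderiv i F q := by
  simp [pderiv, fderiv_neg]

lemma pderiv_mul' (hF : DifferentiableAt ℝ F q) (hG : DifferentiableAt ℝ G q) :
    pderiv i (fun q => F q * G q) q = pderiv i F q * G q + F q * pderiv i G q := by
  simp [pderiv, fderiv_fun_mul hF hG]; ring

lemma pderiv_pow' (n : ℕ) (hF : DifferentiableAt ℝ F q) :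
    pderiv i (fun q => F q ^ n) q = n * F q ^ (n - 1) * pderiv i F q := by
  induction n with
  | zero => simpa using pderiv_const' i 1 q
  | succ n ih =>
    have h : (fun q => F q ^ (n+1)) = fun q => F q ^ n * F q := by
      funext q; ring
    rw [h, pderiv_mul' (F := fun q => F q ^ n) (hF.pow n) hF, ih]
    rcases Nat.eq_zero_or_pos n with h0 | h0
    · subst h0; simp
    · have hp : F q * F q ^ (n-1) = F q ^ n := by
        rw [← pow_succ']; congr 1; omega
      rw [show n + 1 - 1 = n from rfl]
      push_cast
      calc (↑n * F q ^ (n-1) * pderiv i F q) * F q + F q ^ n * pderiv i F q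
          = ↑n * (F q * F q ^ (n-1)) * pderiv i F q + F q ^ n * pderiv i F q := by ring
        _ = (↑n + 1) * F q ^ n * pderiv i F q := by rw [hp]; ring

end PderivRules

lemma Ham_eq (a b bφ bZ w₁ w₂ w₃ : ℝ) : Ham a b bφ bZ w₁ w₂ w₃ = fun q : Fin 6 → ℝ =>
    (1/2)*((q 3 + -(1/2)*bZ*q 1)^2 + (q 4 + (1/2)*bZ*q 0)^2
      + (q 5 + -(1/2)*bφ*((q 0)^2 + (q 1)^2))^2)
    + bφ*(-(1/8)*bφ*((q 0)^2 + (q 1)^2)^2 + w₃*((q 0)^2 + (q 1)^2)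
      - bZ*((a/2)*((q 0)^2 - (q 1)^2) + b*q 0*q 1) + w₁*q 0 + w₂*q 1) := rfl

lemma X1_eq (a b bφ bZ w₁ w₂ w₃ sZ3 : ℝ) : X1 a b bφ bZ w₁ w₂ w₃ sZ3 = fun q : Fin 6 → ℝ =>
    (q 0 * (q 4 + (1/2)*bZ*q 0) - q 1 * (q 3 + -(1/2)*bZ*q 1)) * (q 5 + -(1/2)*bφ*((q 0)^2 + (q 1)^2))
    + a*(q 3 + -(1/2)*bZ*q 1)^2
    + b*(q 3 + -(1/2)*bZ*q 1)*(q 4 + (1/2)*bZ*q 0)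
    + (-b*bZ*q 0 + a*bZ*q 1 + 2*w₃*q 1 - (1/2)*bφ*((q 0)^2 + (q 1)^2)*q 1 + w₂) * (q 3 + -(1/2)*bZ*q 1)
    + (a*bZ*q 0 + b*bZ*q 1 - 2*w₃*q 0 + (1/2)*bφ*((q 0)^2 + (q 1)^2)*q 0 - w₁) * (q 4 + (1/2)*bZ*q 0)
    + (-bφ*(a*(q 0)^2 + b*q 0*q 1) - (bZ/2)*((q 0)^2 + (q 1)^2) + sZ3) * (q 5 + -(1/2)*bφ*((q 0)^2 + (q 1)^2))
    + (-(1/2)*(bφ^2*((q 0)^2 + (q 1)^2) + 2*bZ^2 - 4*bφ*w₃ + 2*bφ*bZ*a)*(a*(q 0)^2 + b*q 0*q 1)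
      + (2*bφ*w₁*a + bφ*w₂*b + w₁*bZ)*q 0 + (bφ*w₁*b + w₂*bZ)*q 1
      - (1/4)*(bφ*bZ*((q 0)^2 + (q 1)^2)^2 + 2*(bφ*bZ*b^2 - bZ^2*a - bφ*sZ3 - 2*w₃*bZ)*((q 0)^2 + (q 1)^2))) := rfl

set_option maxHeartbeats 1000000 in
lemma dHam0 (a b bφ bZ w₁ w₂ w₃ : ℝ) (q : Fin 6 → ℝ) :
    pderiv 0 (Ham a b bφ bZ w₁ w₂ w₃) q = (((1/2 : ℝ) * ((((2 : ℝ) * (q 4 + (((1/2 : ℝ) * bZ) * q 0))) * ((1/2 : ℝ) * bZ)) + (((2 : ℝ) * (q 5 + (((-(1/2 : ℝ)) * bφ) * ((q 0 ^ 2) + (q 1 ^ 2))))) * (((-(1/2 : ℝ)) * bφ) * ((2 : ℝ) * q 0))))) + (bφ * ((((((-(1/8 : ℝ)) * bφ) * (((2 : ℝ) * ((q 0 ^ 2) + (q 1 ^ 2))) * ((2 : ℝ) * q 0))) + (w₃ * ((2 : ℝ) * q 0))) - (bZ * (((a * (1/2 : ℝ)) * ((2 : ℝ) * q 0)) + (b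 * q 1)))) + w₁))) := by
  rw [Ham_eq]
  simp (disch := fun_prop) only [pderiv_add', pderiv_sub', pderiv_neg', pderiv_mul',
    pderiv_pow', pderiv_coord, pderiv_const']
  simp only [Fin.reduceEq, reduceIte]
  push_cast
  ring

set_option maxHeartbeats 1000000 in
lemma dHam1 (a b bφ bZ w₁ w₂ w₃ : ℝ) (q : Fin 6 → ℝ) :
    pderiv 1 (Ham a b bφ bZ w₁ w₂ w₃) q = (((1/2 : ℝ) * ((((2 : ℝ) * (q 3 + (((-(1/2 : ℝ)) * bZ) * q 1))) * ((-(1/2 : ℝ)) * bZ)) + (((2 : ℝ) * (q 5 + (((-(1/2 : ℝ)) * bφ) * ((q 0 ^ 2) + (q 1 ^ 2))))) * (((-(1/2 : ℝ)) * bφ) * ((2 : ℝ) * q 1))))) + (bφ * ((((((-(1/8 : ℝ)) * bφ) * (((2 : ℝ) * ((q 0 ^ 2) + (q 1 ^ 2))) * ((2 : ℝ) * q 1))) + (w₃ * ((2 : ℝ) * q 1))) - (bZ * (((a * (1/2 : ℝ)) * ((0 : ℝ) - ((2 : ℝ) * q 1))) + (b * q 0)))) + w₂))) := by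
  rw [Ham_eq]
  simp (disch := fun_prop) only [pderiv_add', pderiv_sub', pderiv_neg', pderiv_mul',
    pderiv_pow', pderiv_coord, pderiv_const']
  simp only [Fin.reduceEq, reduceIte]
  push_cast
  ring

set_option maxHeartbeats 1000000 in
lemma dHam2 (a b bφ bZ w₁ w₂ w₃ : ℝ) (q : Fin 6 → ℝ) :
    pderiv 2 (Ham a b bφ bZ w₁ w₂ w₃) q = (0 : ℝ) := by
  rw [Ham_eq]
  simp (disch := fun_prop) only [pderiv_add', pderiv_sub', pderiv_neg', pderiv_mul',
    pderiv_pow', pderiv_coord, pderiv_const']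
  simp only [Fin.reduceEq, reduceIte]
  push_cast
  ring

set_option maxHeartbeats 1000000 in
lemma dHam3 (a b bφ bZ w₁ w₂ w₃ : ℝ) (q : Fin 6 → ℝ) :
    pderiv 3 (Ham a b bφ bZ w₁ w₂ w₃) q = ((1/2 : ℝ) * ((2 : ℝ) * (q 3 + (((-(1/2 : ℝ)) * bZ) * q 1)))) := by
  rw [Ham_eq]
  simp (disch := fun_prop) only [pderiv_add', pderiv_sub', pderiv_neg', pderiv_mul',
    pderiv_pow', pderiv_coord, pderiv_const']
  simp only [Fin.reduceEq, reduceIte]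
  push_cast
  ring

set_option maxHeartbeats 1000000 in
lemma dHam4 (a b bφ bZ w₁ w₂ w₃ : ℝ) (q : Fin 6 → ℝ) :
    pderiv 4 (Ham a b bφ bZ w₁ w₂ w₃) q = ((1/2 : ℝ) * ((2 : ℝ) * (q 4 + (((1/2 : ℝ) * bZ) * q 0)))) := by
  rw [Ham_eq]
  simp (disch := fun_prop) only [pderiv_add', pderiv_sub', pderiv_neg', pderiv_mul',
    pderiv_pow', pderiv_coord, pderiv_const']
  simp only [Fin.reduceEq, reduceIte]
  push_cast
  ring

set_option maxHeartbeats 1000000 in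
lemma dHam5 (a b bφ bZ w₁ w₂ w₃ : ℝ) (q : Fin 6 → ℝ) :
    pderiv 5 (Ham a b bφ bZ w₁ w₂ w₃) q = ((1/2 : ℝ) * ((2 : ℝ) * (q 5 + (((-(1/2 : ℝ)) * bφ) * ((q 0 ^ 2) + (q 1 ^ 2)))))) := by
  rw [Ham_eq]
  simp (disch := fun_prop) only [pderiv_add', pderiv_sub', pderiv_neg', pderiv_mul',
    pderiv_pow', pderiv_coord, pderiv_const']
  simp only [Fin.reduceEq, reduceIte]
  push_cast
  ring

set_option maxHeartbeats 1000000 in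
lemma dX10 (a b bφ bZ w₁ w₂ w₃ sZ3 : ℝ) (q : Fin 6 → ℝ) :
    pderiv 0 (X1 a b bφ bZ w₁ w₂ w₃ sZ3) q = (((((((((q 4 + (((1/2 : ℝ) * bZ) * q 0)) + (q 0 * ((1/2 : ℝ) * bZ))) * (q 5 + (((-(1/2 : ℝ)) * bφ) * ((q 0 ^ 2) + (q 1 ^ 2))))) + (((q 0 * (q 4 + (((1/2 : ℝ) * bZ) * q 0))) - (q 1 * (q 3 + (((-(1/2 : ℝ)) * bZ) * q 1)))) * (((-(1/2 : ℝ)) * bφ) * ((2 : ℝ) * q 0)))) + ((b * (q 3 + (((-(1/2 : ℝ)) * bZ) * q 1))) * ((1/2 : ℝ) * bZ))) + (((-(b * bZ)) - ((((1/2 : ℝ) * bφ) * ((2 : ℝ) * q 0)) * q 1)) * (q 3 + (((-(1/2 : ℝ)) * bZ) * q 1)))) + (((((a * bZ) - ((2 : ℝ) * w₃)) + (((((1/2 : ℝ) * bφ) * ((2 : ℝ) * q 0)) * q 0) + (((1/2 : ℝ) * bφ) * ((q 0 ^ 2) + (q 1 ^ 2))))) * (q 4 + (((1/2 : ℝ)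 * bZ) * q 0))) + (((((((a * bZ) * q 0) + ((b * bZ) * q 1)) - (((2 : ℝ) * w₃) * q 0)) + ((((1/2 : ℝ) * bφ) * ((q 0 ^ 2) + (q 1 ^ 2))) * q 0)) - w₁) * ((1/2 : ℝ) * bZ)))) + ((((-(bφ * ((a * ((2 : ℝ) * q 0)) + (b * q 1)))) - ((bZ * (1/2 : ℝ)) * ((2 : ℝ) * q 0))) * (q 5 + (((-(1/2 : ℝ)) * bφ) * ((q 0 ^ 2) + (q 1 ^ 2))))) + ((((-(bφ * ((a * (q 0 ^ 2)) + ((b * q 0) * q 1)))) - ((bZ * (1/2 : ℝ)) * ((q 0 ^ 2) + (q 1 ^ 2)))) + sZ3) * (((-(1/2 : ℝ)) * bφ) * ((2 : ℝ) * q 0))))) + ((((((-(1/2 : ℝ)) * ((bφ ^ 2) * ((2 : ℝ) * q 0))) * ((a * (q 0 ^ 2)) + ((b * q 0) * q 1))) + (((-(1/2 : ℝ)) * (((((bφ ^ 2) * ((q 0 ^ 2) + (q 1 ^ 2))) + ((2 : ℝ) * (bZ ^ 2))) - (((4 : ℝ) * bφ) * w₃)) + ((((2 : ℝ) * bφ)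 * bZ) * a))) * ((a * ((2 : ℝ) * q 0)) + (b * q 1)))) + ((((((2 : ℝ) * bφ) * w₁) * a) + ((bφ * w₂) * b)) + (w₁ * bZ))) - ((1/4 : ℝ) * (((bφ * bZ) * (((2 : ℝ) * ((q 0 ^ 2) + (q 1 ^ 2))) * ((2 : ℝ) * q 0))) + (((2 : ℝ) * (((((bφ * bZ) * (b ^ 2)) - ((bZ ^ 2) * a)) - (bφ * sZ3)) - (((2 : ℝ) * w₃) * bZ))) * ((2 : ℝ) * q 0)))))) := by
  rw [X1_eq]
  simp (disch := fun_prop) only [pderiv_add', pderiv_sub', pderiv_neg', pderiv_mul',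
    pderiv_pow', pderiv_coord, pderiv_const']
  simp only [Fin.reduceEq, reduceIte]
  push_cast
  ring

set_option maxHeartbeats 1000000 in
lemma dX11 (a b bφ bZ w₁ w₂ w₃ sZ3 : ℝ) (q : Fin 6 → ℝ) :
    pderiv 1 (X1 a b bφ bZ w₁ w₂ w₃ sZ3) q = ((((((((((0 : ℝ) - ((q 3 + (((-(1/2 : ℝ)) * bZ) * q 1)) + (q 1 * ((-(1/2 : ℝ)) * bZ)))) * (q 5 + (((-(1/2 : ℝ)) * bφ) * ((q 0 ^ 2) + (q 1 ^ 2))))) + (((q 0 * (q 4 + (((1/2 : ℝ) * bZ) * q 0))) - (q 1 * (q 3 + (((-(1/2 : ℝ)) * bZ) * q 1)))) * (((-(1/2 : ℝ)) * bφ) * ((2 : ℝ) * q 1)))) + (a * (((2 : ℝ) * (q 3 + (((-(1/2 : ℝ)) * bZ) * q 1))) * ((-(1/2 : ℝ)) * bZ)))) + ((b * ((-(1/2 : ℝ)) * bZ)) * (q 4 + (((1/2 : ℝ) * bZ) * q 0)))) + (((((a * bZ) + ((2 : ℝ) * w₃)) - (((((1/2 : ℝ) * bφ) * ((2 : ℝ)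 * q 1)) * q 1) + (((1/2 : ℝ) * bφ) * ((q 0 ^ 2) + (q 1 ^ 2))))) * (q 3 + (((-(1/2 : ℝ)) * bZ) * q 1))) + ((((((-((b * bZ) * q 0)) + ((a * bZ) * q 1)) + (((2 : ℝ) * w₃) * q 1)) - ((((1/2 : ℝ) * bφ) * ((q 0 ^ 2) + (q 1 ^ 2))) * q 1)) + w₂) * ((-(1/2 : ℝ)) * bZ)))) + (((b * bZ) + ((((1/2 : ℝ) * bφ) * ((2 : ℝ) * q 1)) * q 0)) * (q 4 + (((1/2 : ℝ) * bZ) * q 0)))) + ((((-(bφ * (b * q 0))) - ((bZ * (1/2 : ℝ)) * ((2 : ℝ) * q 1))) * (q 5 + (((-(1/2 : ℝ)) * bφ) * ((q 0 ^ 2) + (q 1 ^ 2))))) + ((((-(bφ * ((a * (q 0 ^ 2)) + ((b * q 0) * q 1)))) - ((bZ * (1/2 : ℝ)) * ((q 0 ^ 2) + (q 1 ^ 2)))) + sZ3) * (((-(1/2 : ℝ)) * bφ) * ((2 : ℝ) * q 1))))) + ((((((-(1/2 : ℝ)) * ((bφ ^ 2) * ((2 : ℝ) * q 1))) * ((a *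 (q 0 ^ 2)) + ((b * q 0) * q 1))) + (((-(1/2 : ℝ)) * (((((bφ ^ 2) * ((q 0 ^ 2) + (q 1 ^ 2))) + ((2 : ℝ) * (bZ ^ 2))) - (((4 : ℝ) * bφ) * w₃)) + ((((2 : ℝ) * bφ) * bZ) * a))) * (b * q 0))) + (((bφ * w₁) * b) + (w₂ * bZ))) - ((1/4 : ℝ) * (((bφ * bZ) * (((2 : ℝ) * ((q 0 ^ 2) + (q 1 ^ 2))) * ((2 : ℝ) * q 1))) + (((2 : ℝ) * (((((bφ * bZ) * (b ^ 2)) - ((bZ ^ 2) * a)) - (bφ * sZ3)) - (((2 : ℝ) * w₃) * bZ))) * ((2 : ℝ) * q 1)))))) := by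
  rw [X1_eq]
  simp (disch := fun_prop) only [pderiv_add', pderiv_sub', pderiv_neg', pderiv_mul',
    pderiv_pow', pderiv_coord, pderiv_const']
  simp only [Fin.reduceEq, reduceIte]
  push_cast
  ring

set_option maxHeartbeats 1000000 in
lemma dX12 (a b bφ bZ w₁ w₂ w₃ sZ3 : ℝ) (q : Fin 6 → ℝ) :
    pderiv 2 (X1 a b bφ bZ w₁ w₂ w₃ sZ3) q = (0 : ℝ) := by
  rw [X1_eq]
  simp (disch := fun_prop) only [pderiv_add', pderiv_sub', pderiv_neg', pderiv_mul',
    pderiv_pow', pderiv_coord, pderiv_const']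
  simp only [Fin.reduceEq, reduceIte]
  push_cast
  ring

set_option maxHeartbeats 1000000 in
lemma dX13 (a b bφ bZ w₁ w₂ w₃ sZ3 : ℝ) (q : Fin 6 → ℝ) :
    pderiv 3 (X1 a b bφ bZ w₁ w₂ w₃ sZ3) q = ((((((0 : ℝ) - q 1) * (q 5 + (((-(1/2 : ℝ)) * bφ) * ((q 0 ^ 2) + (q 1 ^ 2))))) + (a * ((2 : ℝ) * (q 3 + (((-(1/2 : ℝ)) * bZ) * q 1))))) + (b * (q 4 + (((1/2 : ℝ) * bZ) * q 0)))) + (((((-((b * bZ) * q 0)) + ((a * bZ) * q 1)) + (((2 : ℝ) * w₃) * q 1)) - ((((1/2 : ℝ) * bφ) * ((q 0 ^ 2) + (q 1 ^ 2))) * q 1)) + w₂)) := by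
  rw [X1_eq]
  simp (disch := fun_prop) only [pderiv_add', pderiv_sub', pderiv_neg', pderiv_mul',
    pderiv_pow', pderiv_coord, pderiv_const']
  simp only [Fin.reduceEq, reduceIte]
  push_cast
  ring

set_option maxHeartbeats 1000000 in
lemma dX14 (a b bφ bZ w₁ w₂ w₃ sZ3 : ℝ) (q : Fin 6 → ℝ) :
    pderiv 4 (X1 a b bφ bZ w₁ w₂ w₃ sZ3) q = (((q 0 * (q 5 + (((-(1/2 : ℝ)) * bφ) * ((q 0 ^ 2) + (q 1 ^ 2))))) + (b * (q 3 + (((-(1/2 : ℝ)) * bZ) * q 1)))) + ((((((a * bZ) * q 0) + ((b * bZ) * q 1)) - (((2 : ℝ) * w₃) * q 0)) + ((((1/2 : ℝ) * bφ) * ((q 0 ^ 2) + (q 1 ^ 2))) * q 0)) - w₁)) := by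
  rw [X1_eq]
  simp (disch := fun_prop) only [pderiv_add', pderiv_sub', pderiv_neg', pderiv_mul',
    pderiv_pow', pderiv_coord, pderiv_const']
  simp only [Fin.reduceEq, reduceIte]
  push_cast
  ring

set_option maxHeartbeats 1000000 in
lemma dX15 (a b bφ bZ w₁ w₂ w₃ sZ3 : ℝ) (q : Fin 6 → ℝ) :
    pderiv 5 (X1 a b bφ bZ w₁ w₂ w₃ sZ3) q = (((q 0 * (q 4 + (((1/2 : ℝ) * bZ) * q 0))) - (q 1 * (q 3 + (((-(1/2 : ℝ)) * bZ) * q 1)))) + (((-(bφ * ((a * (q 0 ^ 2)) + ((b * q 0) * q 1)))) - ((bZ * (1/2 : ℝ)) * ((q 0 ^ 2) + (q 1 ^ 2)))) + sZ3)) := by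
  rw [X1_eq]
  simp (disch := fun_prop) only [pderiv_add', pderiv_sub', pderiv_neg', pderiv_mul',
    pderiv_pow', pderiv_coord, pderiv_const']
  simp only [Fin.reduceEq, reduceIte]
  push_cast
  ring

set_option maxHeartbeats 4000000 in
/-- `X₁` is a first integral of the nonstandard family and commutes with `p₃`. -/
theorem X1_is_first_integral (a b bφ bZ w₁ w₂ w₃ sZ3 : ℝ) :
    ∀ q : Fin 6 → ℝ,
      poisson (Ham a b bφ bZ w₁ w₂ w₃) (X1 a b bφ bZ w₁ w₂ w₃ sZ3) q = 0 ∧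
      poisson (X1 a b bφ bZ w₁ w₂ w₃ sZ3) (fun q => q 5) q = 0 := by
  intro q
  constructor
  · simp only [poisson, Fin.sum_univ_three,
      show Fin.castAdd 3 (0:Fin 3) = (0:Fin 6) from rfl,
      show Fin.castAdd 3 (1:Fin 3) = (1:Fin 6) from rfl,
      show Fin.castAdd 3 (2:Fin 3) = (2:Fin 6) from rfl,
      show Fin.natAdd 3 (0:Fin 3) = (3:Fin 6) from rfl,
      show Fin.natAdd 3 (1:Fin 3) = (4:Fin 6) from rfl,
      show Fin.natAdd 3 (2:Fin 3) = (5:Fin 6) from rfl,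
      dHam0, dHam1, dHam2, dHam3, dHam4, dHam5,
      dX10, dX11, dX12, dX13, dX14, dX15]
    ring
  · simp only [poisson, Fin.sum_univ_three,
      show Fin.castAdd 3 (0:Fin 3) = (0:Fin 6) from rfl,
      show Fin.castAdd 3 (1:Fin 3) = (1:Fin 6) from rfl,
      show Fin.castAdd 3 (2:Fin 3) = (2:Fin 6) from rfl,
      show Fin.natAdd 3 (0:Fin 3) = (3:Fin 6) from rfl,
      show Fin.natAdd 3 (1:Fin 3) = (4:Fin 6) from rfl,
      show Fin.natAdd 3 (2:Fin 3) = (5:Fin 6) from rfl,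
      dX10, dX11, dX12, dX13, dX14, dX15, pderiv_coord, pderiv_const',
      Fin.reduceEq, reduceIte]
    push_cast
    ring
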